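/- arXiv:2004.09896 — 4 statements merged into one kernel-verified Lean document; each statement's English description precedes it below -/
import Mathlib

section
/- Let b : ℝ → ℝ³ be continuous and suppose b(t) × (∫_{t₀}^t b(τ) dτ) = 0 for all t > t₀. Then U(t) := exp(-i ((∫_{t₀}^t b(τ)dτ)·σ)) satisfies the Schrödinger equation i·U'(t) = (b(t)·σ)·U(t) with U(t₀) = I. -/
open Matrix Complex

noncomputable section

def σ1 : Matrix (Fin 2) (Fin 2) ℂ := !![0, 1; 1, 0]
def σ2 : Matrix (Fin 2) (Fin 2) ℂ := !![0, -Complex.I; Complex.I, 0]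
def σ3 : Matrix (Fin 2) (Fin 2) ℂ := !![1, 0; 0, -1]

/-- r·σ = r₁σ₁ + r₂σ₂ + r₃σ₃ for a real vector r. -/
def dotSigma (r : Fin 3 → ℝ) : Matrix (Fin 2) (Fin 2) ℂ :=
  (r 0 : ℂ) • σ1 + (r 1 : ℂ) • σ2 + (r 2 : ℂ) • σ3

/-- Euclidean norm of a vector in ℝ³. -/
def enorm3 (r : Fin 3 → ℝ) : ℝ := Real.sqrt (r 0 ^ 2 + r 1 ^ 2 + r 2 ^ 2)


/-! The Pauli product rule `(a·σ)(c·σ) = (a·c) I + i (a×c)·σ` shows that `a·σ` and `c·σ` commute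
when `a × c = 0`. With `B(t) = ∫_{t₀}^t b`, the hypothesis therefore makes `X(t) = -i B(t)·σ`
commute with its derivative `X'(t) = -i b(t)·σ`, and for such a curve `exp(X)' = X' exp(X)`:
along the direction `X'(t)` the exponential splits as `exp(X + sX') = exp(X) exp(sX')`. -/

section BanachAlgebra

variable {𝕂 𝔸 : Type*} [RCLike 𝕂] [NormedRing 𝔸] [NormedAlgebra 𝕂 𝔸]

theorem mem_eball_expSeries_radius (x : 𝔸) :
    x ∈ Metric.eball 0 (NormedSpace.expSeries 𝕂 𝔸).radius := by
  simp [NormedSpace.expSeries_radius_eq_top]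

variable [CompleteSpace 𝔸]

theorem differentiableAt_normedSpace_exp (x : 𝔸) : DifferentiableAt 𝕂 NormedSpace.exp x :=
  (NormedSpace.analyticAt_exp_of_mem_ball x (mem_eball_expSeries_radius x)).differentiableAt

theorem fderiv_normedSpace_exp_apply_of_commute {x y : 𝔸} (h : Commute x y) :
    fderiv 𝕂 NormedSpace.exp x y = NormedSpace.exp x * y := by
  have hline : HasDerivAt (fun s : 𝕂 => NormedSpace.exp (x + s • y))
      (fderiv 𝕂 NormedSpace.exp x y) 0 := by
    have hexp : HasFDerivAt NormedSpace.exp (fderiv 𝕂 NormedSpace.exp x) (x + (0 : 𝕂) • y) := by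
      simpa using (differentiableAt_normedSpace_exp (𝕂 := 𝕂) x).hasFDerivAt
    exact hexp.comp_hasDerivAt 0
      (by simpa using ((hasDerivAt_id (0 : 𝕂)).smul_const y).const_add x)
  have hsplit : HasDerivAt (fun s : 𝕂 => NormedSpace.exp (x + s • y))
      (NormedSpace.exp x * y) 0 := by
    have := (hasDerivAt_exp_smul_const y (0 : 𝕂)).const_mul (NormedSpace.exp x)
    rw [zero_smul, NormedSpace.exp_zero, one_mul] at this
    exact this.congr_of_eventuallyEq (Filter.Eventually.of_forall fun s =>
      NormedSpace.exp_add_of_commute_of_mem_ball (h.smul_right s)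
        (mem_eball_expSeries_radius (𝕂 := 𝕂) _) (mem_eball_expSeries_radius _))
  exact hline.unique hsplit

theorem HasDerivAt.normedSpace_exp_of_commute {f : 𝕂 → 𝔸} {f' : 𝔸} {t : 𝕂}
    (hf : HasDerivAt f f' t) (hc : Commute (f t) f') :
    HasDerivAt (fun s => NormedSpace.exp (f s)) (f' * NormedSpace.exp (f t)) t := by
  rw [hc.symm.exp_right.eq, ← fderiv_normedSpace_exp_apply_of_commute (𝕂 := 𝕂) hc]
  exact (differentiableAt_normedSpace_exp (f t)).hasFDerivAt.comp_hasDerivAt t hf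

end BanachAlgebra

theorem dotSigma_mul_dotSigma (a c : Fin 3 → ℝ) :
    dotSigma a * dotSigma c = ((a ⬝ᵥ c : ℝ) : ℂ) • 1 + I • dotSigma (a ⨯₃ c) := by
  ext i j
  fin_cases i <;> fin_cases j <;>
    simp [dotSigma, σ1, σ2, σ3, Matrix.mul_apply, cross_apply, dotProduct, Fin.sum_univ_three] <;>
    ring_nf <;> simp [I_sq] <;> ring

theorem commute_dotSigma_of_cross_eq_zero {a c : Fin 3 → ℝ} (h : a ⨯₃ c = 0) :
    Commute (dotSigma a) (dotSigma c) := by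
  rw [Commute, SemiconjBy, dotSigma_mul_dotSigma, dotSigma_mul_dotSigma, ← cross_anticomm a c, h,
    neg_zero, dotProduct_comm]

section LinftyOpNorm

-- Matrices carry no global norm; the `L∞` operator norm induces their product topology and makes
-- square matrices a Banach algebra.
attribute [local instance] Matrix.linftyOpNormedAddCommGroup Matrix.linftyOpNormedSpace

theorem HasDerivAt.matrix_apply {𝕜 α m n : Type*} [NontriviallyNormedField 𝕜]
    [NormedAddCommGroup α] [NormedSpace 𝕜 α] [Fintype m] [Fintype n]
    {F : 𝕜 → Matrix m n α} {F' : Matrix m n α} {t : 𝕜} (hF : HasDerivAt F F' t) (i : m) (j : n) :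
    HasDerivAt (fun s => F s i j) (F' i j) t :=
  ((ContinuousLinearMap.proj j).comp
    (ContinuousLinearMap.proj i : Matrix m n α →L[𝕜] _)).hasFDerivAt.comp_hasDerivAt t hF

end LinftyOpNorm

section LinftyOpNormedAlgebra

attribute [local instance] Matrix.linftyOpNormedRing Matrix.linftyOpNormedAlgebra

theorem HasDerivAt.dotSigma {r : ℝ → Fin 3 → ℝ} {r' : Fin 3 → ℝ} {t : ℝ}
    (hr : HasDerivAt r r' t) : HasDerivAt (fun s => dotSigma (r s)) (dotSigma r') t := by
  have h (k : Fin 3) (M : Matrix (Fin 2) (Fin 2) ℂ) :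
      HasDerivAt (fun s => (r s k : ℂ) • M) ((r' k : ℂ) • M) t :=
    (hasDerivAt_pi.1 hr k).ofReal_comp.smul_const M
  exact ((h 0 σ1).add (h 1 σ2)).add (h 2 σ3)

theorem hasDerivAt_exp_neg_I_smul_dotSigma {r : ℝ → Fin 3 → ℝ} {r' : Fin 3 → ℝ} {t : ℝ}
    (hr : HasDerivAt r r' t) (h : r' ⨯₃ r t = 0) :
    HasDerivAt (fun s => NormedSpace.exp (-(I • dotSigma (r s))))
      (-I • (dotSigma r' * NormedSpace.exp (-(I • dotSigma (r t))))) t := by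
  have hc : Commute (-(I • dotSigma (r t))) (-(I • dotSigma r')) :=
    (((commute_dotSigma_of_cross_eq_zero h).symm.smul_left I).smul_right I).neg_left.neg_right
  have hf : HasDerivAt (fun s => -(I • dotSigma (r s))) (-(I • dotSigma r')) t :=
    (hr.dotSigma.const_smul I).neg
  rw [neg_smul, ← smul_mul_assoc, ← neg_mul]
  exact hf.normedSpace_exp_of_commute hc

end LinftyOpNormedAlgebra

theorem qubit_exp_solution
    (b : ℝ → Fin 3 → ℝ) (hb : Continuous fun t => b t) (t₀ : ℝ)
    (hcomm : ∀ t, t₀ < t →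
      crossProduct (b t) (fun k => ∫ τ in t₀..t, b τ k) = 0) :
    let U : ℝ → Matrix (Fin 2) (Fin 2) ℂ := fun t =>
      NormedSpace.exp (-(Complex.I • dotSigma fun k => ∫ τ in t₀..t, b τ k))
    U t₀ = 1 ∧
    ∀ t, t₀ < t → ∀ i j, HasDerivAt (fun s => U s i j)
      ((-Complex.I • (dotSigma (b t) * U t)) i j) t := by
  intro U
  refine ⟨by simp [U, dotSigma], fun t ht i j => ?_⟩
  have hB : HasDerivAt (fun s k => ∫ τ in t₀..s, b τ k) (b t) t := hasDerivAt_pi.2 fun k =>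
    (((continuous_apply k).comp hb).integral_hasStrictDerivAt t₀ t).hasDerivAt
  exact (hasDerivAt_exp_neg_I_smul_dotSigma hB (hcomm t ht)).matrix_apply i j
end
end

section
/- Define for constants J₁, J₂ ∈ ℝ with J₁² + J₂² = 1, functions φ, γ : ℝ → ℝ and times t₀ ≤ s ≤ t with γ additive (γ(t,t₀) = γ(t,s) + γ(s,t₀)): u₀(t,t₀) = cos((φ(t)-φ(t₀))/2)cos γ(t,t₀) - J₁ sin((φ(t)-φ(t₀))/2) sin γ(t,t₀), ũ₁(t,t₀) = -J₂ cos((φ(t)+φ(t₀))/2) sin γ(t,t₀), ũ₂(t,t₀) = -J₂ sin((φ(t)+φ(t₀))/2) sin γ(t,t₀), ũ₃(t,t₀) = -J₁ cos((φ(t)-φ(t₀))/2) sin γ(t,t₀) - sin((φ(t)-φ(t₀))/2) cos γ(t,t₀). Then the cocycle identity u₀(t,s)u₀(s,t₀) - ũ(t,s)·ũ(s,t₀) = u₀(t,t₀) holds. -/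
noncomputable section

/-- The scalar component u₀(t,s) of the qubit evolution solution in Theorem 3. -/
def u0 (J₁ : ℝ) (φ : ℝ → ℝ) (γ : ℝ → ℝ → ℝ) (t s : ℝ) : ℝ :=
  Real.cos ((φ t - φ s) / 2) * Real.cos (γ t s) -
    J₁ * Real.sin ((φ t - φ s) / 2) * Real.sin (γ t s)

/-- The vector component ũ(t,s) ∈ ℝ³ of the qubit evolution solution. -/
def uVec (J₁ J₂ : ℝ) (φ : ℝ → ℝ) (γ : ℝ → ℝ → ℝ) (t s : ℝ) : Fin 3 → ℝ :=
  ![-(J₂ * Real.cos ((φ t + φ s) / 2) * Real.sin (γ t s)),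
    -(J₂ * Real.sin ((φ t + φ s) / 2) * Real.sin (γ t s)),
    -(J₁ * Real.cos ((φ t - φ s) / 2) * Real.sin (γ t s)) -
      Real.sin ((φ t - φ s) / 2) * Real.cos (γ t s)]
theorem cocycle_scalar (J₁ J₂ : ℝ) (hJ : J₁ ^ 2 + J₂ ^ 2 = 1)
    (φ : ℝ → ℝ) (γ : ℝ → ℝ → ℝ) (t₀ s t : ℝ) (h₀ : t₀ ≤ s) (h₁ : s ≤ t)
    (hadd : γ t t₀ = γ t s + γ s t₀) :
    u0 J₁ φ γ t s * u0 J₁ φ γ s t₀ -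
        (uVec J₁ J₂ φ γ t s 0 * uVec J₁ J₂ φ γ s t₀ 0 +
          uVec J₁ J₂ φ γ t s 1 * uVec J₁ J₂ φ γ s t₀ 1 +
          uVec J₁ J₂ φ γ t s 2 * uVec J₁ J₂ φ γ s t₀ 2) =
      u0 J₁ φ γ t t₀ := by
  simp only [u0, uVec, Matrix.cons_val_zero, Matrix.cons_val_one, Matrix.head_cons,
    Matrix.cons_val_two, Matrix.tail_cons, hadd]
  have hφ : (φ t - φ t₀) / 2 = (φ t - φ s) / 2 + (φ s - φ t₀) / 2 := by ring
  have hφ2 : (φ t + φ s) / 2 - (φ s + φ t₀) / 2 = (φ t - φ t₀) / 2 := by ring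
  have key := Real.cos_sub ((φ t + φ s) / 2) ((φ s + φ t₀) / 2)
  rw [hφ2, hφ, Real.cos_add] at key
  rw [hφ, Real.cos_add, Real.sin_add, Real.cos_add (γ t s), Real.sin_add (γ t s)]
  linear_combination (J₂ ^ 2 * Real.sin (γ t s) * Real.sin (γ s t₀)) * key -
    ((Real.cos ((φ t - φ s) / 2) * Real.cos ((φ s - φ t₀) / 2) -
      Real.sin ((φ t - φ s) / 2) * Real.sin ((φ s - φ t₀) / 2)) *
      Real.sin (γ t s) * Real.sin (γ s t₀)) * hJ
end
end

section
/- With the same definitions of u₀, ũ via constants J₁, J₂ (J₁²+J₂²=1), a function φ, and an additive γ, the vector cocycle identity u₀(t,s)ũ(s,t₀) + u₀(s,t₀)ũ(t,s) - ũ(t,s) × ũ(s,t₀) = ũ(t,t₀) holds componentwise. -/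
noncomputable section

theorem cocycle_vector (J₁ J₂ : ℝ) (hJ : J₁ ^ 2 + J₂ ^ 2 = 1)
    (φ : ℝ → ℝ) (γ : ℝ → ℝ → ℝ) (t₀ s t : ℝ) (h₀ : t₀ ≤ s) (h₁ : s ≤ t)
    (hadd : γ t t₀ = γ t s + γ s t₀) :
    u0 J₁ φ γ t s • uVec J₁ J₂ φ γ s t₀ + u0 J₁ φ γ s t₀ • uVec J₁ J₂ φ γ t s -
        crossProduct (uVec J₁ J₂ φ γ t s) (uVec J₁ J₂ φ γ s t₀) =
      uVec J₁ J₂ φ γ t t₀ := by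
  have h1 : (φ t - φ t₀) / 2 = (φ t - φ s) / 2 + (φ s - φ t₀) / 2 := by ring
  have h2 : (φ t + φ t₀) / 2 = (φ t + φ s) / 2 - (φ s - φ t₀) / 2 := by ring
  have h3 : (φ s + φ t₀) / 2 =
      (φ t + φ s) / 2 - (φ t - φ s) / 2 - (φ s - φ t₀) / 2 := by ring
  set A := (φ t - φ s) / 2
  set B := (φ s - φ t₀) / 2
  set P := (φ t + φ s) / 2
  have hA := Real.sin_sq_add_cos_sq A
  have hB := Real.sin_sq_add_cos_sq B
  have hP := Real.sin_sq_add_cos_sq P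
  set cA := Real.cos A; set sA := Real.sin A
  set cB := Real.cos B; set sB := Real.sin B
  set cP := Real.cos P; set sP := Real.sin P
  set c1 := Real.cos (γ t s); set s1 := Real.sin (γ t s)
  set c2 := Real.cos (γ s t₀); set s2 := Real.sin (γ s t₀)
  funext i
  fin_cases i <;>
    simp only [u0, uVec, crossProduct, hadd, h1, h2, h3, Real.cos_add, Real.sin_add,
      Real.cos_sub, Real.sin_sub, Pi.add_apply, Pi.sub_apply, Pi.smul_apply, smul_eq_mul,
      LinearMap.mk₂_apply, Fin.zero_eta, Fin.mk_one, Fin.isValue, show ((⟨2, by omega⟩ : Fin 3)) = 2 from rfl,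
      Matrix.cons_val_zero, Matrix.cons_val_one, Matrix.head_cons,
      Matrix.cons_val_two, Matrix.tail_cons]
  · linear_combination (-sB*sP*c1*s2*J₂ - sB*cP*s1*s2*J₁*J₂ + cB*sP*s1*s2*J₁*J₂
      - cB*cP*c1*s2*J₂) * hA
  · linear_combination (-sB*sP*s1*s2*J₁*J₂ + sB*cP*c1*s2*J₂ - cB*sP*c1*s2*J₂
      - cB*cP*s1*s2*J₁*J₂) * hA
  · linear_combination (sA*cB*s1*s2*J₂^2 + cA*sB*s1*s2*J₂^2) * hP
      + (sA*cB*s1*s2 + cA*sB*s1*s2) * hJ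
end
end

section
/- Let b : ℝ → ℝ³ be defined in spherical coordinates with constant polar angle θ, azimuthal angle φ(t) = ωt + η, and constant norm ‖b(t)‖ = β > 0, i.e., b(t) = β(sin θ cos(ωt+η), sin θ sin(ωt+η), cos θ). If ω ≠ 0 and sin θ ≠ 0, then there exists t > t₀ such that b(t) × ∫_{t₀}^t b(τ)dτ ≠ 0. -/
open Real intervalIntegral

theorem rotating_field_violates_commutativity
    (θ ω η β t₀ : ℝ) (hω : ω ≠ 0) (hθ : Real.sin θ ≠ 0) (hβ : 0 < β)
    (b : ℝ → Fin 3 → ℝ)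
    (hb : ∀ t, b t = ![β * (Real.sin θ * Real.cos (ω * t + η)),
                       β * (Real.sin θ * Real.sin (ω * t + η)),
                       β * Real.cos θ]) :
    ∃ t, t₀ < t ∧
      crossProduct (b t) (fun k => ∫ τ in t₀..t, b τ k) ≠ 0 := by
  have hωabs : (0:ℝ) < |ω| := abs_pos.mpr hω
  set t := t₀ + π / |ω| with htdef
  have htpos : t₀ < t := by
    have : 0 < π / |ω| := div_pos Real.pi_pos hωabs
    simp [htdef]; linarith
  refine ⟨t, htpos, ?_⟩
  -- integrals of components 0 and 1
  have hI0 : (∫ τ in t₀..t, b τ 0)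
      = β * Real.sin θ * (ω⁻¹ * (Real.sin (ω * t + η) - Real.sin (ω * t₀ + η))) := by
    simp only [hb]
    have : (∫ τ in t₀..t, (β * (Real.sin θ * Real.cos (ω * τ + η))))
        = β * Real.sin θ * ∫ τ in t₀..t, Real.cos (ω * τ + η) := by
      rw [← intervalIntegral.integral_const_mul]; ring_nf
    rw [show (fun τ => ![β * (Real.sin θ * Real.cos (ω * τ + η)),
        β * (Real.sin θ * Real.sin (ω * τ + η)), β * Real.cos θ] 0)
        = fun τ => β * (Real.sin θ * Real.cos (ω * τ + η)) by funext τ; rfl, this,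
      intervalIntegral.integral_comp_mul_add Real.cos hω η, integral_cos]
    simp [mul_comm]
  have hI1 : (∫ τ in t₀..t, b τ 1)
      = β * Real.sin θ * (ω⁻¹ * (Real.cos (ω * t₀ + η) - Real.cos (ω * t + η))) := by
    simp only [hb]
    have : (∫ τ in t₀..t, (β * (Real.sin θ * Real.sin (ω * τ + η))))
        = β * Real.sin θ * ∫ τ in t₀..t, Real.sin (ω * τ + η) := by
      rw [← intervalIntegral.integral_const_mul]; ring_nf
    rw [show (fun τ => ![β * (Real.sin θ * Real.cos (ω * τ + η)),
        β * (Real.sin θ * Real.sin (ω * τ + η)), β * Real.cos θ] 1)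
        = fun τ => β * (Real.sin θ * Real.sin (ω * τ + η)) by funext τ; rfl, this,
      intervalIntegral.integral_comp_mul_add Real.sin hω η, integral_sin]
    simp [mul_comm]
  intro h
  have h2 := congrFun h 2
  rw [cross_apply] at h2
  simp only [Matrix.cons_val_two, Matrix.tail_cons, Matrix.head_cons, Pi.zero_apply] at h2
  -- h2 : b t 0 * I1 - b t 1 * I0 = 0
  have hb0 : b t 0 = β * (Real.sin θ * Real.cos (ω * t + η)) := by rw [hb]; rfl
  have hb1 : b t 1 = β * (Real.sin θ * Real.sin (ω * t + η)) := by rw [hb]; rfl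
  rw [hb0, hb1, hI0, hI1] at h2
  have key : Real.cos (ω * t + η) * Real.cos (ω * t₀ + η)
      + Real.sin (ω * t + η) * Real.sin (ω * t₀ + η) = -1 := by
    rw [← Real.cos_sub]
    have : ω * t + η - (ω * t₀ + η) = ω * (π / |ω|) := by rw [htdef]; ring
    rw [this, ← Real.cos_abs]
    have : |ω * (π / |ω|)| = π := by
      rw [abs_mul, abs_div, abs_abs, abs_of_pos Real.pi_pos]
      field_simp
    rw [this, Real.cos_pi]
  have hcontr : β * (Real.sin θ * Real.cos (ω * t + η)) *
        (β * Real.sin θ * (ω⁻¹ * (Real.cos (ω * t₀ + η) - Real.cos (ω * t + η)))) -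
      β * (Real.sin θ * Real.sin (ω * t + η)) *
        (β * Real.sin θ * (ω⁻¹ * (Real.sin (ω * t + η) - Real.sin (ω * t₀ + η))))
      = β * Real.sin θ * (β * Real.sin θ) * ω⁻¹ *
        ((Real.cos (ω * t + η) * Real.cos (ω * t₀ + η)
          + Real.sin (ω * t + η) * Real.sin (ω * t₀ + η))
         - (Real.cos (ω * t + η) ^ 2 + Real.sin (ω * t + η) ^ 2)) := by ring
  rw [hcontr, key, Real.cos_sq_add_sin_sq] at h2
  have : β * Real.sin θ * (β * Real.sin θ) * ω⁻¹ * (-1 - 1) ≠ 0 := by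
    apply mul_ne_zero
    apply mul_ne_zero
    · exact mul_ne_zero (mul_ne_zero hβ.ne' hθ) (mul_ne_zero hβ.ne' hθ)
    · exact inv_ne_zero hω
    · norm_num
  exact this h2
end
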